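/- arXiv:2410.07566 — 9 statements merged into one kernel-verified Lean document; each statement's English description precedes it below -/
import Mathlib

section
/- In EIP-1559 with unlimited supply and posted price p ≥ 0, a cartel consisting of the miner and a single user cannot increase its joint utility by any on-chain deviation: for every value v ≥ 0, every bid b ≥ 0 submitted by the colluding user, and every finite multiset J of nonnegative fabricated bids injected by the miner, the cartel's joint utility (v − p)·1[b ≥ p] − p·|{j ∈ J : j ≥ p}| is at most (v − p)·1[v ≥ p], the joint utility obtained when the user bids his value truthfully and the miner fabricates no bids; moreover, censoring the user's bid yields joint utility −p·|{j ∈ J : j ≥ p}| ≤ (v − p)·1[v ≥ p]. -/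
/-- **EIP-1559 with unlimited supply is strongly collusion proof for a
miner–single-user cartel (on-chain deviations).**
With posted price `p ≥ 0`, a bid is included iff it is at least `p`, an
included bid pays `p`, all payments are burned (the miner earns zero from
users' bids and burns `p` for each fabricated bid of size at least `p`).
For any bid `b ≥ 0` of the colluding user of value `v ≥ 0`, and any finite
multiset `J` of nonnegative fabricated miner bids, the cartel's joint
utility `(v − p)·1[b ≥ p] − p·|{j ∈ J : j ≥ p}|` cannot exceed
`(v − p)·1[v ≥ p]`, the joint utility from truthful bidding with no
fabricated bids; moreover censoring the user's bid, which yields joint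
utility `−p·|{j ∈ J : j ≥ p}|`, also cannot exceed it. -/
theorem eip1559_strong_collusion_proof
    (p v b : ℝ) (J : Multiset ℝ)
    (hp : 0 ≤ p) (hv : 0 ≤ v) (hb : 0 ≤ b) (hJ : ∀ j ∈ J, 0 ≤ j) :
    (v - p) * (if p ≤ b then (1 : ℝ) else 0)
        - p * ((J.filter (fun j => p ≤ j)).card : ℝ)
      ≤ (v - p) * (if p ≤ v then (1 : ℝ) else 0) ∧
    -(p * ((J.filter (fun j => p ≤ j)).card : ℝ))
      ≤ (v - p) * (if p ≤ v then (1 : ℝ) else 0) := by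
  have hburn : 0 ≤ p * ((J.filter (fun j => p ≤ j)).card : ℝ) :=
    mul_nonneg hp (Nat.cast_nonneg _)
  have key : (v - p) * (if p ≤ b then (1 : ℝ) else 0)
      ≤ (v - p) * (if p ≤ v then (1 : ℝ) else 0) := by
    rcases le_or_gt p v with h | h
    · simp only [if_pos h]
      split_ifs <;> nlinarith
    · simp only [if_neg (not_le.2 h)]
      split_ifs <;> nlinarith
  have key0 : (0 : ℝ) ≤ (v - p) * (if p ≤ v then (1 : ℝ) else 0) := by
    split_ifs with h <;> nlinarith
  constructor <;> linarith
end

section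
/- In the (k+1)th-price auction with reserve a ≥ 0 and block size k ≥ 1, truthful bidding is a dominant strategy and is individually rational: for every value v ≥ 0 and every finite multiset c of competing nonnegative bids, the utility of bidding v is at least the utility of bidding any other b ≥ 0, and the utility of bidding v is nonnegative. -/
/-- The `(k+1)`-th largest element (1-indexed, i.e. index `k` of the
descending sort) of a finite multiset of reals, defaulting to `0` when the
multiset has at most `k` elements. -/
noncomputable def kPlusOneLargest (k : ℕ) (s : Multiset ℝ) : ℝ :=
  ((s.sort (· ≤ ·)).reverse).getD k 0

/-- Utility in the `(k+1)`-th price auction with reserve `a` and block size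
`k`, of a user with value `v` bidding `b` against the multiset `c` of
competing bids: the bid `b` is included iff `b ≥ a` and fewer than `k`
competing bids are strictly greater than `b`; an included bid pays
`max(a, t)` where `t` is the `(k+1)`-th largest bid of the full profile
`{b} ∪ c` (and `t = 0` if the profile has at most `k` bids); an excluded
bid pays nothing. -/
noncomputable def kPlusOneUtility (k : ℕ) (a v b : ℝ) (c : Multiset ℝ) : ℝ :=
  if a ≤ b ∧ Multiset.card (c.filter (fun x => b < x)) < k then
    v - max a (kPlusOneLargest k (b ::ₘ c))
  else 0

namespace KP1Aux

lemma desc_rel {L : List ℝ} (hL : L.Pairwise (· ≥ ·)) {i j : ℕ} (hij : i ≤ j)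
    (hj : j < L.length) : L[j] ≤ L[i] := by
  rcases eq_or_lt_of_le hij with rfl | h
  · exact le_refl _
  · exact (List.pairwise_iff_getElem.mp hL) i j (lt_of_lt_of_le h hj.le) hj h

lemma desc_count_le {L : List ℝ} (hL : L.Pairwise (· ≥ ·)) {k : ℕ} (hk : k < L.length)
    {p : ℝ → Prop} [DecidablePred p] (hp : ∀ x, p x → L[k] < x) :
    Multiset.card ((↑L : Multiset ℝ).filter p) ≤ k := by
  have hcoe : Multiset.card ((↑L : Multiset ℝ).filter p)
      = (L.filter (fun x => decide (p x))).length := by simp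
  rw [hcoe]
  have hnil : (L.drop k).filter (fun x => decide (p x)) = [] := by
    rw [List.filter_eq_nil_iff]
    intro a ha
    obtain ⟨j, hj, hEq⟩ := List.mem_iff_getElem.mp ha
    have hjl : k + j < L.length := by
      rw [List.length_drop] at hj; omega
    have hEq' : a = L[k + j] := by rw [← hEq, List.getElem_drop]
    simp only [decide_eq_true_eq]
    intro hpa
    have h1 : L[k + j] ≤ L[k] := desc_rel hL (Nat.le_add_right _ _) hjl
    rw [hEq'] at hpa
    exact absurd (hp _ hpa) (not_lt.mpr h1)
  calc (L.filter (fun x => decide (p x))).length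
      = ((L.take k ++ L.drop k).filter (fun x => decide (p x))).length := by
        rw [List.take_append_drop]
    _ = ((L.take k).filter (fun x => decide (p x))).length := by
        rw [List.filter_append, hnil, List.append_nil]
    _ ≤ (L.take k).length := List.length_filter_le _ _
    _ ≤ k := by simp [List.length_take]

lemma desc_count_ge {L : List ℝ} (hL : L.Pairwise (· ≥ ·)) {k : ℕ} (hk : k < L.length)
    {p : ℝ → Prop} [DecidablePred p] (hp : ∀ x, L[k] ≤ x → p x) :
    k + 1 ≤ Multiset.card ((↑L : Multiset ℝ).filter p) := by
  have hcoe : Multiset.card ((↑L : Multiset ℝ).filter p)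
      = (L.filter (fun x => decide (p x))).length := by simp
  rw [hcoe]
  have hall : (L.take (k+1)).filter (fun x => decide (p x)) = L.take (k+1) := by
    rw [List.filter_eq_self]
    intro a ha
    obtain ⟨j, hj, hEq⟩ := List.mem_iff_getElem.mp ha
    have hjk : j ≤ k := by
      rw [List.length_take] at hj; omega
    have hEq' : a = L[j]'(by rw [List.length_take] at hj; omega) := by
      rw [← hEq, List.getElem_take]
    simp only [decide_eq_true_eq]
    rw [hEq']
    exact hp _ (desc_rel hL hjk hk)
  calc k + 1 = (L.take (k+1)).length := by rw [List.length_take]; omega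
    _ = ((L.take (k+1)).filter (fun x => decide (p x))).length := by rw [hall]
    _ ≤ ((L.take (k+1)).filter (fun x => decide (p x))).length
        + ((L.drop (k+1)).filter (fun x => decide (p x))).length := Nat.le_add_right _ _
    _ = (L.filter (fun x => decide (p x))).length := by
        rw [← List.length_append, ← List.filter_append, List.take_append_drop]

lemma exists_desc (k : ℕ) (s : Multiset ℝ) :
    ∃ L : List ℝ, L.Pairwise (· ≥ ·) ∧ (L : Multiset ℝ) = s ∧
      L.length = Multiset.card s ∧ kPlusOneLargest k s = L.getD k 0 := by
  refine ⟨(s.sort (· ≤ ·)).reverse, ?_, ?_, ?_, rfl⟩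
  · rw [List.pairwise_reverse]
    have h := s.pairwise_sort (fun x y => x ≤ y)
    exact h.imp (fun hab => hab)
  · rw [Multiset.coe_reverse, Multiset.sort_eq]
  · simp

lemma large_le {k : ℕ} {s : Multiset ℝ} {v : ℝ} (hv : 0 ≤ v)
    (h : Multiset.card (s.filter (fun x => v < x)) ≤ k) : kPlusOneLargest k s ≤ v := by
  obtain ⟨L, hL, hLs, hlen, hget⟩ := exists_desc k s
  by_cases hk : k < L.length
  · rw [hget, List.getD_eq_getElem _ _ hk]
    by_contra hlt
    push_neg at hlt
    have h2 := desc_count_ge hL hk (p := fun x => v < x)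
      (fun x hx => lt_of_lt_of_le hlt hx)
    rw [hLs] at h2
    omega
  · rw [hget, List.getD_eq_default _ _ (not_lt.mp hk)]
    exact hv

lemma large_gt {k : ℕ} {s : Multiset ℝ} {v : ℝ}
    (h : k + 1 ≤ Multiset.card (s.filter (fun x => v < x))) : v < kPlusOneLargest k s := by
  obtain ⟨L, hL, hLs, hlen, hget⟩ := exists_desc k s
  have hk : k < L.length := by
    have := Multiset.card_le_card (Multiset.filter_le (fun x => v < x) s)
    omega
  rw [hget, List.getD_eq_getElem _ _ hk]
  by_contra hle
  push_neg at hle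
  have h2 := desc_count_le hL hk (p := fun x => v < x)
    (fun x hx => lt_of_le_of_lt hle hx)
  rw [hLs] at h2
  omega

lemma large_char {k : ℕ} {s : Multiset ℝ} (h : k < Multiset.card s) :
    Multiset.card (s.filter (fun x => kPlusOneLargest k s < x)) ≤ k ∧
    k + 1 ≤ Multiset.card (s.filter (fun x => kPlusOneLargest k s ≤ x)) := by
  obtain ⟨L, hL, hLs, hlen, hget⟩ := exists_desc k s
  have hk : k < L.length := by omega
  rw [hget, List.getD_eq_getElem _ _ hk]
  constructor
  · rw [← hLs]
    exact desc_count_le hL hk (fun x hx => hx)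
  · rw [← hLs]
    exact desc_count_ge hL hk (fun x hx => hx)

lemma char_unique {k : ℕ} {s : Multiset ℝ} {t1 t2 : ℝ}
    (h1a : Multiset.card (s.filter (fun x => t1 < x)) ≤ k)
    (h1b : k + 1 ≤ Multiset.card (s.filter (fun x => t1 ≤ x)))
    (h2a : Multiset.card (s.filter (fun x => t2 < x)) ≤ k)
    (h2b : k + 1 ≤ Multiset.card (s.filter (fun x => t2 ≤ x))) : t1 = t2 := by
  rcases lt_trichotomy t1 t2 with h | h | h
  · exfalso
    have hmono : s.filter (fun x => t2 ≤ x) ≤ s.filter (fun x => t1 < x) :=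
      Multiset.monotone_filter_right s (fun x hx => lt_of_lt_of_le h hx)
    have := Multiset.card_le_card hmono
    omega
  · exact h
  · exfalso
    have hmono : s.filter (fun x => t1 ≤ x) ≤ s.filter (fun x => t2 < x) :=
      Multiset.monotone_filter_right s (fun x hx => lt_of_lt_of_le h hx)
    have := Multiset.card_le_card hmono
    omega

lemma large_small {k : ℕ} {s : Multiset ℝ} (h : Multiset.card s ≤ k) :
    kPlusOneLargest k s = 0 := by
  obtain ⟨L, hL, hLs, hlen, hget⟩ := exists_desc k s
  rw [hget, List.getD_eq_default _ _ (by omega)]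

lemma payment {k : ℕ} (hk : 1 ≤ k) {c : Multiset ℝ} (hcard : k ≤ Multiset.card c) {b : ℝ}
    (hb : Multiset.card (c.filter (fun x => b < x)) < k) :
    kPlusOneLargest k (b ::ₘ c) = kPlusOneLargest (k - 1) c := by
  set K := kPlusOneLargest (k - 1) c with hK
  have hc1 : k - 1 < Multiset.card c := by omega
  obtain ⟨hKa, hKb⟩ := large_char hc1
  rw [← hK] at hKa hKb
  have hKle : K ≤ b := by
    by_contra hcon
    push_neg at hcon
    have hmono : c.filter (fun x => K ≤ x) ≤ c.filter (fun x => b < x) :=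
      Multiset.monotone_filter_right c (fun x hx => lt_of_lt_of_le hcon hx)
    have := Multiset.card_le_card hmono
    omega
  have h1 : Multiset.card ((b ::ₘ c).filter (fun x => K < x)) ≤ k := by
    rw [Multiset.filter_cons]
    rcases em (K < b) with hx | hx
    · simp only [if_pos hx, Multiset.card_add, Multiset.card_singleton]
      omega
    · rw [if_neg hx, zero_add]
      omega
  have h2 : k + 1 ≤ Multiset.card ((b ::ₘ c).filter (fun x => K ≤ x)) := by
    rw [Multiset.filter_cons, if_pos hKle]
    simp only [Multiset.card_add, Multiset.card_singleton]
    omega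
  have hcard2 : k < Multiset.card (b ::ₘ c) := by
    rw [Multiset.card_cons]; omega
  obtain ⟨g1, g2⟩ := large_char hcard2
  exact char_unique g1 g2 h1 h2

end KP1Aux

open KP1Aux

/-- **The `(k+1)`-th price auction with reserve is DSIC and IR for users.**
For block size `k ≥ 1`, reserve `a ≥ 0`, value `v ≥ 0`, any finite multiset
`c` of nonnegative competing bids and any alternative bid `b ≥ 0`, bidding
truthfully yields at least the utility of bidding `b`, and yields
nonnegative utility. -/
theorem kPlusOnePriceAuction_truthful_dominant_and_IR
    (k : ℕ) (hk : 1 ≤ k) (a v b : ℝ) (ha : 0 ≤ a) (hv : 0 ≤ v) (hb : 0 ≤ b)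
    (c : Multiset ℝ) (hc : ∀ x ∈ c, (0 : ℝ) ≤ x) :
    kPlusOneUtility k a v v c ≥ kPlusOneUtility k a v b c ∧
    kPlusOneUtility k a v v c ≥ 0 := by
  have hIR : kPlusOneUtility k a v v c ≥ 0 := by
    unfold kPlusOneUtility
    split_ifs with h
    · obtain ⟨hav, hcount⟩ := h
      have hfilt : Multiset.card ((v ::ₘ c).filter (fun x => v < x)) ≤ k := by
        rw [Multiset.filter_cons, if_neg (lt_irrefl v), zero_add]
        omega
      have ht : kPlusOneLargest k (v ::ₘ c) ≤ v := large_le hv hfilt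
      have : max a (kPlusOneLargest k (v ::ₘ c)) ≤ v := max_le hav ht
      linarith
    · exact le_refl 0
  refine ⟨?_, hIR⟩
  by_cases hbinc : a ≤ b ∧ Multiset.card (c.filter (fun x => b < x)) < k
  · by_cases hvinc : a ≤ v ∧ Multiset.card (c.filter (fun x => v < x)) < k
    · unfold kPlusOneUtility
      rw [if_pos hbinc, if_pos hvinc]
      by_cases hcard : k ≤ Multiset.card c
      · rw [payment hk hcard hbinc.2, payment hk hcard hvinc.2]
      · have e1 : kPlusOneLargest k (b ::ₘ c) = 0 :=
          large_small (by rw [Multiset.card_cons]; omega)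
        have e2 : kPlusOneLargest k (v ::ₘ c) = 0 :=
          large_small (by rw [Multiset.card_cons]; omega)
        rw [e1, e2]
    · have hvzero : kPlusOneUtility k a v v c = 0 := by
        unfold kPlusOneUtility; rw [if_neg hvinc]
      rw [hvzero]
      unfold kPlusOneUtility
      rw [if_pos hbinc]
      rcases not_and_or.mp hvinc with hva | hcnt
      · push_neg at hva
        have : a ≤ max a (kPlusOneLargest k (b ::ₘ c)) := le_max_left _ _
        linarith
      · push_neg at hcnt
        have hvb : v < b := by
          by_contra hcon
          push_neg at hcon
          have hmono : c.filter (fun x => v < x) ≤ c.filter (fun x => b < x) :=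
            Multiset.monotone_filter_right c (fun x hx => lt_of_le_of_lt hcon hx)
          have := Multiset.card_le_card hmono
          omega
        have hfilt : k + 1 ≤ Multiset.card ((b ::ₘ c).filter (fun x => v < x)) := by
          rw [Multiset.filter_cons, if_pos hvb]
          simp only [Multiset.card_add, Multiset.card_singleton]
          omega
        have ht : v < kPlusOneLargest k (b ::ₘ c) := large_gt hfilt
        have : kPlusOneLargest k (b ::ₘ c) ≤ max a (kPlusOneLargest k (b ::ₘ c)) :=
          le_max_right _ _
        linarith
  · have : kPlusOneUtility k a v b c = 0 := by
      unfold kPlusOneUtility; rw [if_neg hbinc]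
    rw [this]
    exact hIR
end

section
/- Let x, p, rev : [0,∞) → ℝ. Suppose (user incentive compatibility) for all v, ṽ ≥ 0, v·x(v) − p(v) ≥ v·x(ṽ) − p(ṽ); and suppose (cartel incentive compatibility, arising from strong collusion proofness of a user–miner cartel) for all v, ṽ ≥ 0, v·x(v) − p(v) + rev(v) ≥ v·x(ṽ) − p(ṽ) + rev(ṽ). Then rev is constant: rev(v) = rev(ṽ) for all v, ṽ ≥ 0. In words, in any on-chain user simple and strongly collusion proof equilibrium, the miner's interim revenue is independent of any single user's reported value. -/
/-!
Subtracting the user's incentive-compatibility inequalities from the cartel's shows that the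
revenue is dominated by the allocation: `|rev a - rev b| ≤ (a - b) * (x a - x b)`. Cutting `[w, v]`
into `n` equal pieces and telescoping gives `|rev v - rev w| ≤ (v - w) * (x v - x w) / n`, since the
increments of `x` telescope as well; letting `n → ∞` yields `rev v = rev w`.
-/

open Filter Topology

section Telescoping

variable {f g : ℝ → ℝ} {s : Set ℝ}

theorem abs_sub_le_mul_sub_of_grid (hs : s.OrdConnected)
    (hfg : ∀ a ∈ s, ∀ b ∈ s, |f a - f b| ≤ (a - b) * (g a - g b))
    {w d : ℝ} (hw : w ∈ s) (hd : 0 ≤ d) :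
    ∀ n : ℕ, w + n * d ∈ s → |f (w + n * d) - f w| ≤ d * (g (w + n * d) - g w)
  | 0, _ => by simp
  | n + 1, hn => by
    push_cast at hn ⊢
    have hnd : 0 ≤ (n : ℝ) * d := by positivity
    have hmid : w + n * d ∈ s := hs.out hw hn ⟨by linarith, by linarith⟩
    have hlast := hfg _ hn _ hmid
    have hfirst := abs_sub_le_mul_sub_of_grid hs hfg hw hd n hmid
    calc |f (w + (n + 1) * d) - f w|
        ≤ |f (w + (n + 1) * d) - f (w + n * d)| + |f (w + n * d) - f w| := abs_sub_le _ _ _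
      _ ≤ d * (g (w + (n + 1) * d) - g w) := by
        rw [show w + (n + 1) * d - (w + n * d) = d by ring] at hlast
        linarith

theorem eq_of_abs_sub_le_mul_sub (hs : s.OrdConnected)
    (hfg : ∀ a ∈ s, ∀ b ∈ s, |f a - f b| ≤ (a - b) * (g a - g b))
    {v w : ℝ} (hv : v ∈ s) (hw : w ∈ s) : f v = f w := by
  wlog hwv : w ≤ v generalizing v w
  · exact (this hw hv (le_of_not_ge hwv)).symm
  have hbound : ∀ n : ℕ, 1 ≤ n → |f v - f w| ≤ (v - w) * (g v - g w) / n := by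
    intro n hn
    have hn0 : (n : ℝ) ≠ 0 := by positivity
    have hgrid : w + n * ((v - w) / n) = v := by field_simp; ring
    have hsteps := abs_sub_le_mul_sub_of_grid hs hfg hw (d := (v - w) / n)
      (div_nonneg (sub_nonneg.2 hwv) n.cast_nonneg) n (by rwa [hgrid])
    rw [hgrid] at hsteps
    linarith [div_mul_eq_mul_div (v - w) (n : ℝ) (g v - g w)]
  have hzero : |f v - f w| ≤ 0 :=
    ge_of_tendsto (tendsto_const_div_atTop_nhds_zero_nat _)
      (eventually_atTop.2 ⟨1, hbound⟩)
  exact sub_eq_zero.1 (abs_nonpos_iff.1 hzero)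

end Telescoping

theorem abs_sub_le_of_incentiveCompatible {x p rev : ℝ → ℝ} {s : Set ℝ}
    (hIC : ∀ v ∈ s, ∀ w ∈ s, v * x v - p v ≥ v * x w - p w)
    (hCartel : ∀ v ∈ s, ∀ w ∈ s, v * x v - p v + rev v ≥ v * x w - p w + rev w)
    {a b : ℝ} (ha : a ∈ s) (hb : b ∈ s) :
    |rev a - rev b| ≤ (a - b) * (x a - x b) := by
  have hIC_ab := hIC a ha b hb
  have hIC_ba := hIC b hb a ha
  have hCartel_ab := hCartel a ha b hb
  have hCartel_ba := hCartel b hb a ha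
  exact abs_le.2 ⟨by linarith, by linarith⟩

/-- **On-chain user simplicity plus strong collusion proofness force a
constant interim miner revenue.**
Let `x v`, `p v`, `rev v` be the interim allocation, payment, and miner
revenue when a fixed user reports value `v ≥ 0`.  If the user's interim
utility satisfies incentive compatibility, and the cartel's utility
`v·x(w) − p(w) + rev(w)` is maximized at the truthful report `w = v`
(strong collusion proofness of a miner–user cartel), then the miner's
interim revenue is independent of the user's reported value. -/
theorem constant_interim_revenue
    (x p rev : ℝ → ℝ)
    (hIC : ∀ v w : ℝ, 0 ≤ v → 0 ≤ w →
      v * x v - p v ≥ v * x w - p w)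
    (hCartel : ∀ v w : ℝ, 0 ≤ v → 0 ≤ w →
      v * x v - p v + rev v ≥ v * x w - p w + rev w) :
    ∀ v w : ℝ, 0 ≤ v → 0 ≤ w → rev v = rev w := fun _ _ hv hw =>
  eq_of_abs_sub_le_mul_sub (s := Set.Ici 0) Set.ordConnected_Ici
    (fun _ ha _ hb => abs_sub_le_of_incentiveCompatible (s := Set.Ici 0)
      (fun v hv w hw => hIC v w hv hw) (fun v hv w hw => hCartel v w hv hw) ha hb)
    hv hw
end

section
/- Let φ : [0,∞) → ℝ be nondecreasing, let v ≥ 0, and let r ≥ 0 satisfy φ(r) = v. Then for every competing bid w ≥ 0 and every bid b ≥ 0, v·1[b ≥ w] + φ(w)·1[b < w] ≤ v·1[r ≥ w] + φ(w)·1[r < w]; that is, bidding r = φ⁻¹(v) pointwise maximizes the cartel's objective over all bids. Moreover, if v < w ≤ r and φ(w) < v, then the truthful bid b = v is strictly suboptimal: v·1[v ≥ w] + φ(w)·1[v < w] = φ(w) < v = v·1[r ≥ w] + φ(w)·1[r < w]. -/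
/-- **Optimal cartel bidding in the cryptographic `(k+1)`-th price auction
(failure of strong collusion proofness).**
Let `φ` be a nondecreasing virtual value function on `[0,∞)`, let the
colluding user have value `v ≥ 0`, and let `r ≥ 0` satisfy `φ(r) = v`
(i.e. `r = φ⁻¹(v)`).  Against any competing bid `w ≥ 0`, the cartel's
objective from a bid `b ≥ 0`, namely `v·1[b ≥ w] + φ(w)·1[b < w]`, is
pointwise maximized by bidding `r`.  Moreover, if `v < w ≤ r` and
`φ(w) < v`, the truthful bid `b = v` is strictly suboptimal: it attains
`φ(w) < v`, while bidding `r` attains `v`. -/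
theorem cartel_virtual_value_bid_optimal
    (φ : ℝ → ℝ) (hφ : ∀ a b : ℝ, 0 ≤ a → a ≤ b → φ a ≤ φ b)
    (v r : ℝ) (hv : 0 ≤ v) (hr : 0 ≤ r) (hrv : φ r = v) :
    (∀ w b : ℝ, 0 ≤ w → 0 ≤ b →
      v * (if w ≤ b then (1 : ℝ) else 0) + φ w * (if b < w then (1 : ℝ) else 0)
        ≤ v * (if w ≤ r then (1 : ℝ) else 0) + φ w * (if r < w then (1 : ℝ) else 0)) ∧
    (∀ w : ℝ, v < w → w ≤ r → φ w < v →
      v * (if w ≤ v then (1 : ℝ) else 0) + φ w * (if v < w then (1 : ℝ) else 0) = φ w ∧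
      φ w < v ∧
      v = v * (if w ≤ r then (1 : ℝ) else 0) + φ w * (if r < w then (1 : ℝ) else 0)) := by
  constructor
  · intro w b hw hb
    rcases le_or_gt w r with hwr | hwr
    · have hφw : φ w ≤ v := hrv ▸ hφ w r hw hwr
      simp only [if_pos hwr, if_neg (not_lt.2 hwr)]
      by_cases h : w ≤ b
      · simp [h, not_lt.2 h]
      · simp [h, not_le.1 h, hφw]
    · have hφw : v ≤ φ w := hrv ▸ hφ r w hr hwr.le
      simp only [if_neg (not_le.2 hwr), if_pos hwr]
      by_cases h : w ≤ b
      · simp [h, not_lt.2 h, hφw]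
      · simp [h, not_le.1 h]
  · intro w h1 h2 h3
    refine ⟨?_, h3, ?_⟩
    · simp [not_le.2 h1, h1]
    · simp [h2, not_lt.2 h2]
end

section
/- Let T be a probability measure on [0,∞) with essential supremum v_sup ∈ [0,∞], and let x : [0,∞) → [0,1] and p : [0,∞) → ℝ satisfy IC and IR for all v, ṽ ≥ 0, with the utility function v ↦ v·x(v) − p(v) T-integrable. If the expected utility is zero, i.e. ∫ (v·x(v) − p(v)) dT(v) = 0, then x(v) = 0 for every v with 0 ≤ v < v_sup: the user is allocated with probability zero at every value strictly below the supremum of the distribution. -/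
open MeasureTheory

/-- The essential supremum (in `ℝ≥0∞`) of a measure `T` on `[0,∞)`:
the infimum of all `s` such that the values below `s` have full measure. -/
noncomputable def essSupValue (T : Measure ℝ) : ENNReal :=
  sInf {s : ENNReal | T {v : ℝ | ENNReal.ofReal v ≤ s} = 1}

/-- **Zero expected utility forces zero allocation below the supremum of
the value distribution.**
Let `T` be a probability measure on `[0,∞)` with essential supremum
`v_sup ∈ [0,∞]`, and let interim rules `x : [0,∞) → [0,1]`, `p` satisfy
incentive compatibility and individual rationality, with the utility
`v ↦ v·x(v) − p(v)` integrable w.r.t. `T`.  If the expected utility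
`∫ (v·x(v) − p(v)) dT(v)` is zero, then `x v = 0` at every value
`0 ≤ v < v_sup`. -/
theorem zero_expected_utility_implies_zero_allocation_below_sup
    (T : Measure ℝ) [IsProbabilityMeasure T] (hT0 : T (Set.Iio 0) = 0)
    (x p : ℝ → ℝ)
    (hx01 : ∀ v : ℝ, 0 ≤ v → 0 ≤ x v ∧ x v ≤ 1)
    (hIC : ∀ v w : ℝ, 0 ≤ v → 0 ≤ w → v * x v - p v ≥ v * x w - p w)
    (hIR : ∀ v : ℝ, 0 ≤ v → v * x v - p v ≥ 0)
    (hint : Integrable (fun v => v * x v - p v) T)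
    (hzero : ∫ v, (v * x v - p v) ∂T = 0) :
    ∀ v : ℝ, 0 ≤ v → ENNReal.ofReal v < essSupValue T → x v = 0 := by
  intro v hv hvlt
  by_contra hxv
  have hxvpos : 0 < x v := lt_of_le_of_ne (hx01 v hv).1 (Ne.symm hxv)
  have hae : ∀ᵐ w ∂T, 0 ≤ w := by
    rw [ae_iff]
    have : {w : ℝ | ¬ 0 ≤ w} = Set.Iio 0 := by ext w; simp
    rw [this]; exact hT0
  have hnneg : 0 ≤ᵐ[T] fun w => w * x w - p w :=
    hae.mono fun w hw => hIR w hw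
  have hzero' : (fun w => w * x w - p w) =ᵐ[T] 0 :=
    (integral_eq_zero_iff_of_nonneg_ae hnneg hint).mp hzero
  have hsub : ∀ w, v < w → 0 < w * x w - p w := by
    intro w hw
    have hw0 : 0 ≤ w := le_of_lt (lt_of_le_of_lt hv hw)
    have h1 : w * x w - p w ≥ w * x v - p v := hIC w v hw0 hv
    have h4 := hIR v hv
    nlinarith [h1]
  have hIoi : T (Set.Ioi v) = 0 := by
    refine measure_mono_null ?_ (ae_iff.mp hzero')
    intro w hw
    simp only [Set.mem_setOf_eq, Pi.zero_apply]
    exact ne_of_gt (hsub w hw)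
  have hIic : T (Set.Iic v) = 1 := by
    have hc : T (Set.Ioi v)ᶜ = 1 := by
      rw [measure_compl measurableSet_Ioi (measure_ne_top T _), hIoi, measure_univ]
      simp
    rwa [Set.compl_Ioi] at hc
  have hset : {w : ℝ | ENNReal.ofReal w ≤ ENNReal.ofReal v} = Set.Iic v := by
    ext w
    simp only [Set.mem_setOf_eq, Set.mem_Iic]
    exact ENNReal.ofReal_le_ofReal_iff hv
  have hmem : ENNReal.ofReal v ∈ {s : ENNReal | T {w : ℝ | ENNReal.ofReal w ≤ s} = 1} := by
    simp only [Set.mem_setOf_eq, hset]; exact hIic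
  have hle : essSupValue T ≤ ENNReal.ofReal v := sInf_le hmem
  exact absurd hvlt (not_lt.mpr hle)
end

section
/- Let T be a probability measure on [0,∞) whose essential supremum v_sup is finite, and let x : [0,∞) → [0,1] and p : [0,∞) → [0,∞) (nonnegative payments) satisfy IC and IR for all values in the support of T, i.e. for all v, ṽ ∈ supp T, v·x(v) − p(v) ≥ v·x(ṽ) − p(ṽ) and v·x(v) − p(v) ≥ 0. Suppose x(v) = 0 for every v ∈ supp T with v < v_sup. If the expected utility is strictly positive, i.e. ∫ (v·x(v) − p(v)) dT(v) > 0, then: (i) T({v_sup}) > 0 and x(v_sup) > 0; and (ii) there exists c < v_sup with T((c, v_sup)) = 0, i.e. the essential supremum of T conditioned on the event {v < v_sup} is strictly less than v_sup. -/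
/-!
Below `v_sup` the allocation vanishes, so almost every value other than `v_sup` has utility
`-p(v) ≤ 0`. Positive expected utility therefore forces an atom at `v_sup` carrying a positive
utility `u`, whence `x(v_sup) > 0`. For a support point `v < v_sup`, IC against `v_sup` gives
`0 ≥ -p(v) ≥ v·x(v_sup) - p(v_sup) ≥ u - (v_sup - v)`, so the support misses
`(v_sup - u, v_sup)`.
-/

open MeasureTheory

/-- The (topological) support of a measure `T` on `ℝ`: the points all of
whose open neighbourhoods have positive measure. -/
def measSupport (T : Measure ℝ) : Set ℝ :=
  {v : ℝ | ∀ U : Set ℝ, IsOpen U → v ∈ U → 0 < T U}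

lemma measSupport_eq_support (T : Measure ℝ) : measSupport T = T.support := by
  rw [Measure.support_eq_forall_isOpen]
  ext v
  exact forall_congr' fun U => forall_comm

lemma ae_mem_measSupport (T : Measure ℝ) : ∀ᵐ v ∂T, v ∈ measSupport T :=
  measSupport_eq_support T ▸ Measure.support_mem_ae

lemma measure_eq_zero_of_forall_notMem_measSupport {T : Measure ℝ} {s : Set ℝ}
    (hs : ∀ v ∈ s, v ∉ measSupport T) : T s = 0 :=
  measure_mono_null hs (ae_mem_measSupport T)

lemma mem_measSupport_of_measure_singleton_pos {T : Measure ℝ} {a : ℝ} (ha : 0 < T {a}) :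
    a ∈ measSupport T := fun _ _ haU =>
  ha.trans_le (measure_mono (Set.singleton_subset_iff.mpr haU))

lemma essSupValue_eq_essSup (T : Measure ℝ) [IsProbabilityMeasure T] :
    essSupValue T = essSup (fun v => ENNReal.ofReal v) T := by
  rw [essSup_eq_sInf, essSupValue]
  congr 1
  ext s
  have hmeas : MeasurableSet {v : ℝ | ENNReal.ofReal v ≤ s} :=
    measurableSet_le ENNReal.measurable_ofReal measurable_const
  rw [Set.mem_ofPred_eq, Set.mem_ofPred_eq, ← prob_compl_eq_zero_iff hmeas]
  simp only [Set.compl_ofPred, not_le]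

lemma ae_le_toReal_essSupValue {T : Measure ℝ} [IsProbabilityMeasure T]
    (hfin : essSupValue T ≠ ⊤) : ∀ᵐ v ∂T, v ≤ (essSupValue T).toReal := by
  filter_upwards [essSupValue_eq_essSup T ▸ ENNReal.ae_le_essSup (fun v => ENNReal.ofReal v)]
    with v hv
  exact (ENNReal.ofReal_le_iff_le_toReal hfin).1 hv

lemma measure_singleton_pos_and_pos_of_integral_pos {α : Type*} [MeasurableSpace α]
    {μ : Measure α} {f : α → ℝ} {a : α} (hf : ∀ᵐ v ∂μ, v ≠ a → f v ≤ 0)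
    (hpos : 0 < ∫ v, f v ∂μ) : 0 < μ {a} ∧ 0 < f a := by
  have not_ae_nonpos : ¬ ∀ᵐ v ∂μ, f v ≤ 0 := fun h =>
    (integral_nonpos_of_ae h).not_gt hpos
  constructor
  · refine pos_iff_ne_zero.2 fun h0 => not_ae_nonpos ?_
    filter_upwards [hf, measure_eq_zero_iff_ae_notMem.1 h0] with v hv hva using hv hva
  · refine lt_of_not_ge fun ha => not_ae_nonpos ?_
    filter_upwards [hf] with v hv
    by_cases hva : v = a
    · exact hva ▸ ha
    · exact hv hva

lemma utility_le_sub_of_ic_of_allocation_eq_zero {x p : ℝ → ℝ} {v w : ℝ}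
    (hIC : v * x v - p v ≥ v * x w - p w) (hxv : x v = 0) (hpv : 0 ≤ p v) (hxw : x w ≤ 1)
    (hvw : v ≤ w) : w * x w - p w ≤ w - v := by
  rw [hxv] at hIC
  nlinarith [mul_le_mul_of_nonneg_left hxw (sub_nonneg.2 hvw)]

theorem positive_expected_utility_characterization_general
    (T : Measure ℝ) [IsProbabilityMeasure T]
    (hfin : essSupValue T ≠ ⊤)
    (x p : ℝ → ℝ)
    (hx01 : ∀ v : ℝ, 0 ≤ x v ∧ x v ≤ 1)
    (hp0 : ∀ v : ℝ, 0 ≤ p v)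
    (hIC : ∀ v w : ℝ, v ∈ measSupport T → w ∈ measSupport T →
      v * x v - p v ≥ v * x w - p w)
    (hbelow : ∀ v : ℝ, v ∈ measSupport T → v < (essSupValue T).toReal → x v = 0)
    (hpos : 0 < ∫ v, (v * x v - p v) ∂T) :
    (0 < T {(essSupValue T).toReal} ∧ 0 < x (essSupValue T).toReal) ∧
    ∃ c : ℝ, c < (essSupValue T).toReal ∧
      T (Set.Ioo c (essSupValue T).toReal) = 0 := by
  set vs := (essSupValue T).toReal
  have hnonpos : ∀ᵐ v ∂T, v ≠ vs → v * x v - p v ≤ 0 := by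
    filter_upwards [ae_mem_measSupport T, ae_le_toReal_essSupValue hfin] with v hv hle hne
    rw [hbelow v hv (lt_of_le_of_ne hle hne)]
    linarith [hp0 v]
  obtain ⟨hatom, hutil⟩ := measure_singleton_pos_and_pos_of_integral_pos hnonpos hpos
  have hxvs : 0 < x vs := by
    by_contra! h
    nlinarith [hp0 vs, mul_nonpos_of_nonneg_of_nonpos (ENNReal.toReal_nonneg : 0 ≤ vs) h]
  have hvs : vs ∈ measSupport T := mem_measSupport_of_measure_singleton_pos hatom
  refine ⟨⟨hatom, hxvs⟩, vs - (vs * x vs - p vs), by linarith,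
    measure_eq_zero_of_forall_notMem_measSupport fun v hv hvT => ?_⟩
  have := utility_le_sub_of_ic_of_allocation_eq_zero (hIC v vs hvT hvs) (hbelow v hvT hv.2)
    (hp0 v) (hx01 vs).2 hv.2.le
  linarith [hv.1]

/-- **Partial converse: characterizing when a user with zero allocation
below the supremum can nevertheless enjoy positive expected utility.**
Let `T` be a probability measure on `[0,∞)` with finite essential supremum
`v_sup`, and let `x : [0,∞) → [0,1]` and nonnegative payments `p` satisfy
IC and IR for all values in the support of `T`.  Suppose `x v = 0` for
every `v` in the support of `T` with `v < v_sup`.  If the expected utility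
is strictly positive, then (i) `T` has an atom at `v_sup` and
`x(v_sup) > 0`, and (ii) there is a `c < v_sup` with `T((c, v_sup)) = 0`,
i.e. the essential supremum of `T` conditioned on `{v < v_sup}` is
strictly below `v_sup`. -/
theorem positive_expected_utility_characterization
    (T : Measure ℝ) [IsProbabilityMeasure T] (hT0 : T (Set.Iio 0) = 0)
    (hfin : essSupValue T ≠ ⊤)
    (x p : ℝ → ℝ)
    (hx01 : ∀ v : ℝ, 0 ≤ x v ∧ x v ≤ 1)
    (hp0 : ∀ v : ℝ, 0 ≤ p v)
    (hIC : ∀ v w : ℝ, v ∈ measSupport T → w ∈ measSupport T →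
      v * x v - p v ≥ v * x w - p w)
    (hIR : ∀ v : ℝ, v ∈ measSupport T → v * x v - p v ≥ 0)
    (hbelow : ∀ v : ℝ, v ∈ measSupport T → v < (essSupValue T).toReal → x v = 0)
    (hpos : 0 < ∫ v, (v * x v - p v) ∂T) :
    (0 < T {(essSupValue T).toReal} ∧ 0 < x (essSupValue T).toReal) ∧
    ∃ c : ℝ, c < (essSupValue T).toReal ∧
      T (Set.Ioo c (essSupValue T).toReal) = 0 :=
  positive_expected_utility_characterization_general T hfin x p hx01 hp0 hIC hbelow hpos
end

section
/- Let b₁ ≥ b₂ ≥ … ≥ b_N ≥ 0 be a nonincreasing list of bids (with the convention b_i = 0 for i > N), let a ≥ 0 be a reserve, let k ≥ 1, and let j = |{i ≤ N : b_i ≥ a}|. Then min(j, k)·max(a, b_{k+1}) ≤ max_{1 ≤ i ≤ k} i·b_i. In words: in the plaintext (k+1)th-price auction, the compliant revenue min(j, k)·max(a, b_{k+1}) (min(j,k) winners each paying max(a, b_{k+1})) never exceeds the revenue max_{1 ≤ i ≤ k} i·b_i that the miner can extract by resetting the reserve to one of the top k submitted bids after seeing all bids. -/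
/-- **The plaintext `(k+1)`-th price auction is not on-chain miner simple:
resetting the reserve to a top bid weakly dominates compliance.**
Let `b 1 ≥ b 2 ≥ … ≥ b N ≥ 0` be the nonincreasingly sorted bids (with
`b i = 0` for `i > N`), let `a ≥ 0` be the reserve and `k ≥ 1` the block
size, and let `j` be the number of submitted bids at least the reserve.
Then the compliant revenue `min(j, k) · max(a, b (k+1))` never exceeds
`max_{1 ≤ i ≤ k} i · b i`, the revenue obtainable by resetting the reserve
to one of the top `k` submitted bids after seeing all bids. -/
theorem plaintext_reserve_reset_dominates_compliance
    (N k : ℕ) (hk : 1 ≤ k) (a : ℝ) (ha : 0 ≤ a)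
    (b : ℕ → ℝ)
    (hmono : ∀ i j : ℕ, i ≤ j → b j ≤ b i)
    (hnonneg : ∀ i : ℕ, 0 ≤ b i)
    (hzero : ∀ i : ℕ, N < i → b i = 0) :
    ((min (((Finset.Icc 1 N).filter (fun i => a ≤ b i)).card) k : ℕ) : ℝ)
        * max a (b (k + 1))
      ≤ (Finset.Icc 1 k).sup' (Finset.nonempty_Icc.mpr hk)
          (fun i => (i : ℝ) * b i) := by
  set S := (Finset.Icc 1 N).filter (fun i => a ≤ b i) with hS
  set m := min S.card k with hm
  have hsup0 : (0:ℝ) ≤ (Finset.Icc 1 k).sup' (Finset.nonempty_Icc.mpr hk)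
      (fun i => (i : ℝ) * b i) := by
    refine le_trans ?_ (Finset.le_sup' _ (Finset.mem_Icc.mpr ⟨le_refl 1, hk⟩))
    simpa using hnonneg 1
  rcases Nat.eq_zero_or_pos m with h0 | hpos
  · rw [h0]; simpa using hsup0
  · have hmk : m ≤ k := min_le_right _ _
    have hmS : m ≤ S.card := min_le_left _ _
    have hex : ∃ i ∈ S, m ≤ i := by
      by_contra h
      push_neg at h
      have hsub : S ⊆ Finset.Icc 1 (m - 1) := by
        intro i hi
        have h1 : 1 ≤ i := (Finset.mem_Icc.mp (Finset.mem_filter.mp hi).1).1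
        have h2 := h i hi
        exact Finset.mem_Icc.mpr ⟨h1, by omega⟩
      have hcard := Finset.card_le_card hsub
      rw [Nat.card_Icc] at hcard
      omega
    obtain ⟨i, hiS, hmi⟩ := hex
    have hai : a ≤ b i := by
      have := Finset.mem_filter.mp hiS
      simpa using this.2
    have ham : a ≤ b m := le_trans hai (hmono m i hmi)
    have hbk : b (k + 1) ≤ b m := hmono m (k + 1) (by omega)
    have hmax : max a (b (k + 1)) ≤ b m := max_le ham hbk
    calc ((m : ℕ) : ℝ) * max a (b (k + 1)) ≤ (m : ℝ) * b m :=
          mul_le_mul_of_nonneg_left hmax (by positivity)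
      _ ≤ _ := Finset.le_sup' (fun i : ℕ => (i : ℝ) * b i) (Finset.mem_Icc.mpr ⟨hpos, hmk⟩)
end

section
/- In the Bonus-on-Matching-Bids auction with reserve r > 0, the posted-price strategy is a pointwise best response whenever all other users bid 0 or r: for every value v ≥ 0, all competing bids c₁, …, c_m ∈ {0, r}, and every bid b ≥ 0, (v − b)·1[b ≥ r and b ≥ c_j for all j] ≤ (v − r)·1[v ≥ r], where the left-hand side is the utility of bidding b and the right-hand side is the utility obtained by the strategy that bids r if v ≥ r and bids 0 otherwise. -/
open Classical in
/-- **The posted-price strategy profile is a user best response in the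
Bonus-on-Matching-Bids auction.**
In the BoMB auction with reserve `r > 0`, a bid is included iff it is the
(weakly) largest submitted bid and at least `r`, and an included user pays
his own bid.  If every competing bid is `0` or `r`, then for every value
`v ≥ 0` and every bid `b ≥ 0`, the utility
`(v − b)·1[b ≥ r ∧ b ≥ cⱼ ∀j]` of bidding `b` is at most
`(v − r)·1[v ≥ r]`, the utility of the posted-price strategy that bids `r`
when `v ≥ r` and bids `0` otherwise. -/
theorem bomb_posted_price_best_response
    (r v b : ℝ) (hr : 0 < r) (hv : 0 ≤ v) (hb : 0 ≤ b)
    (c : Multiset ℝ) (hc : ∀ x ∈ c, x = (0 : ℝ) ∨ x = r) :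
    (v - b) * (if r ≤ b ∧ ∀ x ∈ c, x ≤ b then (1 : ℝ) else 0)
      ≤ (v - r) * (if r ≤ v then (1 : ℝ) else 0) := by
  split_ifs with h1 h2 h2
  · have hrb := h1.1; nlinarith
  · have hrb := h1.1; nlinarith
  · nlinarith
  · simp
end

section
/- For each n ∈ ℕ, let x_n, p_n, rev_n : [0,∞) → ℝ denote the interim allocation, payment, and miner-revenue rules of a TFM with n participating users, and let T be a probability measure on [0,∞). Suppose for each n: (user IC) for all v, ṽ ≥ 0, v·x_n(v) − p_n(v) ≥ v·x_n(ṽ) − p_n(ṽ); (cartel IC) for all v, ṽ ≥ 0, v·x_n(v) − p_n(v) + rev_n(v) ≥ v·x_n(ṽ) − p_n(ṽ) + rev_n(ṽ); and the boundary conditions rev_n(0) ≥ ∫ rev_{n−1}(v) dT(v) (from strong collusion proofness: censoring a colluding zero-value user cannot raise the cartel's utility) and rev_n(0) ≤ ∫ rev_{n−1}(v) dT(v) (from on-chain miner simplicity: fabricating a zero bid cannot raise the miner's revenue), with each rev_n T-integrable. Then there is a single constant C with rev_n(v) = C for all n ∈ ℕ and all v ≥ 0: the miner's expected revenue is independent of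 the number of participating users, even after conditioning on the bid of any single user. -/
/-!
Comparing the user IC and cartel IC constraints at two values `v, w` sandwiches the change in
revenue: `|rev w - rev v| ≤ (w - v) (x w - x v)`. The right-hand side is quadratic in the step,
so summing it over a partition of `[0, v]` into `N` equal steps telescopes to
`v (x v - x 0) / N → 0`; hence `rev n` is constant on `[0, ∞)`. Then `∫ rev n dT = rev n 0`,
and the two boundary conditions give `rev (n + 1) 0 = rev n 0`.
-/

open MeasureTheory Filter Topology Set

theorem abs_sub_le_mul_sub_div_nat {f g : ℝ → ℝ} {a b : ℝ} (hab : a ≤ b)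
    (h : ∀ s ∈ Icc a b, ∀ t ∈ Icc a b, |f t - f s| ≤ (t - s) * (g t - g s))
    {N : ℕ} (hN : 0 < N) :
    |f b - f a| ≤ (b - a) * (g b - g a) / N := by
  have hN' : (0 : ℝ) < N := Nat.cast_pos.mpr hN
  set t : ℕ → ℝ := fun i => a + i * ((b - a) / N)
  have ht_mem : ∀ i ≤ N, t i ∈ Icc a b := by
    intro i hi
    have hi' : (i : ℝ) ≤ N := Nat.cast_le.mpr hi
    have hwidth : 0 ≤ (b - a) / N := div_nonneg (sub_nonneg.mpr hab) hN'.le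
    refine ⟨le_add_of_nonneg_right (by positivity), ?_⟩
    calc a + i * ((b - a) / N) ≤ a + N * ((b - a) / N) := by gcongr
      _ = b := by field_simp; ring
  have ht0 : t 0 = a := by simp [t]
  have htN : t N = b := by simp only [t]; field_simp; ring
  have hdiff : ∀ i, t (i + 1) - t i = (b - a) / N := by intro i; simp only [t]; push_cast; ring
  calc |f b - f a| = |∑ i ∈ Finset.range N, (f (t (i + 1)) - f (t i))| := by
        rw [Finset.sum_range_sub (fun i => f (t i)), htN, ht0]
    _ ≤ ∑ i ∈ Finset.range N, |f (t (i + 1)) - f (t i)| := Finset.abs_sum_le_sum_abs _ _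
    _ ≤ ∑ i ∈ Finset.range N, (b - a) / N * (g (t (i + 1)) - g (t i)) := by
        refine Finset.sum_le_sum fun i hi => ?_
        have hi := Finset.mem_range.mp hi
        rw [← hdiff i]
        exact h _ (ht_mem i hi.le) _ (ht_mem (i + 1) hi)
    _ = (b - a) * (g b - g a) / N := by
        rw [← Finset.mul_sum, Finset.sum_range_sub (fun i => g (t i)), htN, ht0]
        ring

theorem eq_of_abs_sub_le_mul_sub_s14 {f g : ℝ → ℝ} {a b : ℝ} (hab : a ≤ b)
    (h : ∀ s ∈ Icc a b, ∀ t ∈ Icc a b, |f t - f s| ≤ (t - s) * (g t - g s)) :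
    f b = f a := by
  have hlim : Tendsto (fun N : ℕ => (b - a) * (g b - g a) / N) atTop (𝓝 0) :=
    tendsto_const_div_atTop_nhds_zero_nat _
  have hle : |f b - f a| ≤ 0 :=
    ge_of_tendsto hlim (eventually_atTop.mpr ⟨1, fun _ hN => abs_sub_le_mul_sub_div_nat hab h hN⟩)
  exact sub_eq_zero.mp (abs_nonpos_iff.mp hle)

section Mechanism

variable {x p rev : ℝ → ℝ}
  (hIC : ∀ v w : ℝ, 0 ≤ v → 0 ≤ w → v * x v - p v ≥ v * x w - p w)
  (hCartel : ∀ v w : ℝ, 0 ≤ v → 0 ≤ w → v * x v - p v + rev v ≥ v * x w - p w + rev w)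
include hIC hCartel

theorem abs_rev_sub_le {v w : ℝ} (hv : 0 ≤ v) (hw : 0 ≤ w) :
    |rev w - rev v| ≤ (w - v) * (x w - x v) := by
  have := hIC v w hv hw
  have := hIC w v hw hv
  have := hCartel v w hv hw
  have := hCartel w v hw hv
  rw [abs_le]
  constructor <;> nlinarith

theorem rev_eq_rev_zero {v : ℝ} (hv : 0 ≤ v) : rev v = rev 0 :=
  eq_of_abs_sub_le_mul_sub_s14 hv fun _ hs _ ht => abs_rev_sub_le hIC hCartel hs.1 ht.1

end Mechanism

theorem integral_eq_of_eqOn_Ici {T : Measure ℝ} [IsProbabilityMeasure T] (hT0 : T (Iio 0) = 0)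
    {f : ℝ → ℝ} {c : ℝ} (hf : ∀ v, 0 ≤ v → f v = c) : ∫ v, f v ∂T = c := by
  have hae : f =ᵐ[T] fun _ => c := by
    refine measure_mono_null (fun v hv => ?_) hT0
    exact not_le.mp fun h => hv (hf v h)
  simp [integral_congr_ae hae]

theorem constant_revenue_across_population_sizes_general
    (T : Measure ℝ) [IsProbabilityMeasure T] (hT0 : T (Set.Iio 0) = 0)
    (x p rev : ℕ → ℝ → ℝ)
    (hIC : ∀ n : ℕ, ∀ v w : ℝ, 0 ≤ v → 0 ≤ w →
      v * x n v - p n v ≥ v * x n w - p n w)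
    (hCartel : ∀ n : ℕ, ∀ v w : ℝ, 0 ≤ v → 0 ≤ w →
      v * x n v - p n v + rev n v ≥ v * x n w - p n w + rev n w)
    (hCensor : ∀ n : ℕ, rev (n + 1) 0 ≥ ∫ v, rev n v ∂T)
    (hFabricate : ∀ n : ℕ, rev (n + 1) 0 ≤ ∫ v, rev n v ∂T) :
    ∃ C : ℝ, ∀ n : ℕ, ∀ v : ℝ, 0 ≤ v → rev n v = C := by
  have hconst : ∀ n v, 0 ≤ v → rev n v = rev n 0 := fun n _ hv =>
    rev_eq_rev_zero (hIC n) (hCartel n) hv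
  have hstep : ∀ n, rev (n + 1) 0 = rev n 0 := fun n => by
    have hint := integral_eq_of_eqOn_Ici hT0 (hconst n)
    linarith [hCensor n, hFabricate n]
  have hzero : ∀ n, rev n 0 = rev 0 0 := fun n => by
    induction n with
    | zero => rfl
    | succ n ih => rw [hstep n, ih]
  exact ⟨rev 0 0, fun n v hv => (hconst n v hv).trans (hzero n)⟩

/-- **On-chain simplicity and strong collusion proofness force constant
expected miner revenue, independent of the number of users.**
For each number `n` of participating users, let `x n`, `p n`, `rev n` be
the interim allocation, payment, and miner-revenue rules of the TFM, and
let `T` be the (probability) distribution of a user's value on `[0,∞)`.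
Assume for each `n`: user incentive compatibility; cartel incentive
compatibility (from strong collusion proofness of a miner–user cartel);
integrability of `rev n`; and the boundary conditions
`rev (n+1) 0 ≥ ∫ rev n dT` (censoring a colluding zero-value user cannot
raise the cartel's utility) and `rev (n+1) 0 ≤ ∫ rev n dT` (fabricating a
zero bid cannot raise the miner's revenue).  Then there is a single
constant `C` with `rev n v = C` for every `n` and every `v ≥ 0`. -/
theorem constant_revenue_across_population_sizes
    (T : Measure ℝ) [IsProbabilityMeasure T] (hT0 : T (Set.Iio 0) = 0)
    (x p rev : ℕ → ℝ → ℝ)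
    (hIC : ∀ n : ℕ, ∀ v w : ℝ, 0 ≤ v → 0 ≤ w →
      v * x n v - p n v ≥ v * x n w - p n w)
    (hCartel : ∀ n : ℕ, ∀ v w : ℝ, 0 ≤ v → 0 ≤ w →
      v * x n v - p n v + rev n v ≥ v * x n w - p n w + rev n w)
    (hInt : ∀ n : ℕ, Integrable (rev n) T)
    (hCensor : ∀ n : ℕ, rev (n + 1) 0 ≥ ∫ v, rev n v ∂T)
    (hFabricate : ∀ n : ℕ, rev (n + 1) 0 ≤ ∫ v, rev n v ∂T) :
    ∃ C : ℝ, ∀ n : ℕ, ∀ v : ℝ, 0 ≤ v → rev n v = C :=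
  constant_revenue_across_population_sizes_general T hT0 x p rev hIC hCartel hCensor hFabricate
end
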